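/- arXiv:1711.07133 — 2 statements merged into one kernel-verified Lean document; each statement's English description precedes it below -/
import Mathlib

section
/- Let λ : [0,∞) → [0,∞) be continuous with cumulative hazard Λ(t) = ∫_0^t λ(s) ds, and let τ be a nonnegative random variable on a probability space (Ω, F, P) with survival function P(τ > t) = exp(−Λ(t)) for all t ≥ 0. Let D_t = 1_{τ ≤ t} be the default indicator process and (H_t) its natural filtration. Then the compensated default process M_t = D_t − ∫_0^t 1_{s < τ} λ(s) ds = D_t − ∫_0^{min(t,τ)} λ(s) ds is a martingale with respect to (H_t). -/
open MeasureTheory Filter Set intervalIntegral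
open scoped NNReal

/-! On `{τ ≤ u}` with `u ≤ s ≤ t` both `M s` and `M t` equal `1 - Λ(τ)`, so `M s` and `M t` have
the same integral over each generator `{τ ≤ u}` of `H_s`. These generators form a π-system and
`E[M t] = 0` for every `t`, so by Dynkin's theorem the integrals agree on all of `H_s`.
The mean vanishes by the layer-cake formula:
`E[Λ(t ∧ τ)] = ∫_0^t λ(u) P(τ > u) du = ∫_0^t λ e^{-Λ} = 1 - e^{-Λ(t)} = P(τ ≤ t)`. -/

section PiSystem

variable {Ω E : Type*} [NormedAddCommGroup E] [NormedSpace ℝ E] {m m0 : MeasurableSpace Ω}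
  {μ : Measure Ω}

theorem setIntegral_eq_of_isPiSystem (hm : m ≤ m0) {S : Set (Set Ω)}
    (hgen : m = MeasurableSpace.generateFrom S) (hS : IsPiSystem S) {f g : Ω → E}
    (hf : Integrable f μ) (hg : Integrable g μ) (huniv : ∫ ω, f ω ∂μ = ∫ ω, g ω ∂μ)
    (hbasic : ∀ A ∈ S, ∫ ω in A, f ω ∂μ = ∫ ω in A, g ω ∂μ) {A : Set Ω}
    (hA : MeasurableSet[m] A) : ∫ ω in A, f ω ∂μ = ∫ ω in A, g ω ∂μ := by
  induction A, hA using MeasurableSpace.induction_on_inter hgen hS with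
  | empty => simp
  | basic A hA => exact hbasic A hA
  | compl A hA ih => rw [setIntegral_compl (hm A hA) hf, setIntegral_compl (hm A hA) hg, ih, huniv]
  | iUnion F hdisj hF ih =>
    rw [integral_iUnion (fun n => hm _ (hF n)) hdisj hf.integrableOn,
      integral_iUnion (fun n => hm _ (hF n)) hdisj hg.integrableOn]
    exact tsum_congr ih

theorem Monotone.isPiSystem_setOf_exists_le {ι : Type*} [LinearOrder ι] {s : ι → Set Ω}
    (hs : Monotone s) (i : ι) : IsPiSystem {t | ∃ j ≤ i, s j = t} := by
  rintro _ ⟨j, hj, rfl⟩ _ ⟨k, hk, rfl⟩ -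
  refine ⟨min j k, (min_le_left j k).trans hj, ?_⟩
  rcases le_total j k with hjk | hkj
  · rw [min_eq_left hjk, inter_eq_left.2 (hs hjk)]
  · rw [min_eq_right hkj, inter_eq_right.2 (hs hkj)]

theorem martingale_filtrationOfSet [CompleteSpace E] [IsFiniteMeasure μ] {ι : Type*}
    [LinearOrder ι] {s : ι → Set Ω} (hsm : ∀ i, MeasurableSet (s i)) (hs : Monotone s)
    {M : ι → Ω → E}
    (hadp : StronglyAdapted (filtrationOfSet hsm) M) (hint : ∀ i, Integrable (M i) μ)
    (hmean : ∀ i j, i ≤ j → ∫ ω, M i ω ∂μ = ∫ ω, M j ω ∂μ)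
    (hset : ∀ k i j, k ≤ i → i ≤ j → ∫ ω in s k, M i ω ∂μ = ∫ ω in s k, M j ω ∂μ) :
    Martingale M (filtrationOfSet hsm) μ := by
  refine ⟨hadp, fun i j hij => (ae_eq_condExp_of_forall_setIntegral_eq _ (hint j)
    (fun _ _ _ => (hint i).integrableOn) (fun A hA _ => ?_) (hadp i).aestronglyMeasurable).symm⟩
  refine setIntegral_eq_of_isPiSystem ((filtrationOfSet hsm).le i) rfl
    (hs.isPiSystem_setOf_exists_le i) (hint i) (hint j) (hmean i j hij) ?_ hA
  rintro _ ⟨k, hk, rfl⟩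
  exact hset k i j hk hij

end PiSystem

section CumulativeHazard

variable {lam : ℝ → ℝ}

theorem hasDerivAt_integral_of_continuousOn_Ici (hc : ContinuousOn lam (Ici 0)) {x : ℝ}
    (hx : 0 < x) : HasDerivAt (fun y => ∫ s in (0:ℝ)..y, lam s) (lam x) x :=
  integral_hasDerivAt_right ((hc.mono Icc_subset_Ici_self).intervalIntegrable_of_Icc hx.le)
    ((hc.mono Ioi_subset_Ici_self).stronglyMeasurableAtFilter isOpen_Ioi x hx)
    (hc.continuousAt (Ici_mem_nhds hx))

theorem continuousOn_integral_Icc (hc : ContinuousOn lam (Ici 0)) {t : ℝ} (ht : 0 ≤ t) :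
    ContinuousOn (fun y => ∫ s in (0:ℝ)..y, lam s) (Icc 0 t) := by
  simpa only [uIcc_of_le ht] using continuousOn_primitive_interval
    ((hc.mono Icc_subset_Ici_self).integrableOn_Icc.mono_set (uIcc_of_le ht).subset)

theorem integral_mul_exp_neg_integral (hc : ContinuousOn lam (Ici 0)) {t : ℝ} (ht : 0 ≤ t) :
    ∫ u in (0:ℝ)..t, lam u * Real.exp (-∫ s in (0:ℝ)..u, lam s) =
      1 - Real.exp (-∫ s in (0:ℝ)..t, lam s) := by
  have hΛ := continuousOn_integral_Icc hc ht
  have hderiv : ∀ x ∈ Ioo 0 t, HasDerivAt (fun y => -Real.exp (-∫ s in (0:ℝ)..y, lam s))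
      (lam x * Real.exp (-∫ s in (0:ℝ)..x, lam s)) x := fun x hx =>
    ((hasDerivAt_integral_of_continuousOn_Ici hc hx.1).fun_neg.exp).fun_neg.congr_deriv (by ring)
  rw [integral_eq_sub_of_hasDerivAt_of_le ht hΛ.neg.rexp.neg hderiv
    (((hc.mono Icc_subset_Ici_self).mul hΛ.neg.rexp).intervalIntegrable_of_Icc ht)]
  simp only [Pi.neg_apply, integral_same, neg_zero, Real.exp_zero]
  ring

theorem integral_le_integral_of_nonneg_on_Ici (hc : ContinuousOn lam (Ici 0))
    (h0 : ∀ s, 0 ≤ s → 0 ≤ lam s) {x t : ℝ} (hx : 0 ≤ x) (hxt : x ≤ t) :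
    ∫ s in (0:ℝ)..x, lam s ≤ ∫ s in (0:ℝ)..t, lam s :=
  integral_mono_interval le_rfl hx hxt
    (ae_restrict_of_forall_mem measurableSet_Ioc fun s hs => h0 s hs.1.le)
    ((hc.mono Icc_subset_Ici_self).intervalIntegrable_of_Icc (hx.trans hxt))

end CumulativeHazard

theorem measurable_integral_min {Ω : Type*} {m : MeasurableSpace Ω} {τ : Ω → ℝ} {lam : ℝ → ℝ}
    {t : ℝ} (hc : ContinuousOn lam (Ici 0)) (ht : 0 ≤ t) (hτ0 : ∀ ω, 0 ≤ τ ω)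
    (hmin : Measurable[m] fun ω => min t (τ ω)) :
    Measurable[m] fun ω => ∫ s in (0:ℝ)..min t (τ ω), lam s := by
  have hΛ : Continuous (IccExtend ht ((Icc 0 t).domRestrict fun y => ∫ s in (0:ℝ)..y, lam s)) :=
    (continuousOn_integral_Icc hc ht).domRestrict.Icc_extend'
  convert hΛ.measurable.comp hmin using 1
  funext ω
  rw [Function.comp_apply, IccExtend_of_mem ht _ ⟨le_min ht (hτ0 ω), min_le_left _ _⟩]
  rfl

section RandomTime

variable {Ω : Type*} [MeasurableSpace Ω] {μ : Measure Ω} {τ : Ω → ℝ} {lam : ℝ → ℝ} {t : ℝ}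

theorem lintegral_integral_min_eq (hint : ∀ x > 0, IntervalIntegrable lam volume 0 x)
    (h0 : ∀ s, 0 ≤ s → 0 ≤ lam s) (hτ : Measurable τ) (hτ0 : ∀ ω, 0 ≤ τ ω) (ht : 0 ≤ t) :
    ∫⁻ ω, ENNReal.ofReal (∫ s in (0:ℝ)..min t (τ ω), lam s) ∂μ =
      ∫⁻ u in Ioo 0 t, μ {ω | u < τ ω} * ENNReal.ofReal (lam u) := by
  rw [lintegral_comp_eq_lintegral_meas_lt_mul μ (ae_of_all _ fun ω => le_min ht (hτ0 ω))
    (measurable_const.min hτ).aemeasurable hint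
    (ae_restrict_of_forall_mem measurableSet_Ioi fun s hs => h0 s hs.le)]
  have hcut : ∀ u, μ {ω | u < min t (τ ω)} * ENNReal.ofReal (lam u) =
      (Iio t).indicator (fun u => μ {ω | u < τ ω} * ENNReal.ofReal (lam u)) u := by
    intro u
    by_cases hu : u < t <;> simp [hu]
  simp_rw [hcut, lintegral_indicator measurableSet_Iio,
    Measure.restrict_restrict measurableSet_Iio, Iio_inter_Ioi]

theorem integrable_integral_min [IsFiniteMeasure μ] (hc : ContinuousOn lam (Ici 0))
    (h0 : ∀ s, 0 ≤ s → 0 ≤ lam s) (hτ : Measurable τ) (hτ0 : ∀ ω, 0 ≤ τ ω) (ht : 0 ≤ t) :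
    Integrable (fun ω => ∫ s in (0:ℝ)..min t (τ ω), lam s) μ := by
  refine .of_bound
    (measurable_integral_min hc ht hτ0 (measurable_const.min hτ)).aestronglyMeasurable
    (∫ s in (0:ℝ)..t, lam s) (ae_of_all _ fun ω => ?_)
  have hmin : 0 ≤ min t (τ ω) := le_min ht (hτ0 ω)
  rw [Real.norm_of_nonneg (integral_nonneg hmin fun s hs => h0 s hs.1)]
  exact integral_le_integral_of_nonneg_on_Ici hc h0 hmin (min_le_left _ _)

theorem integral_integral_min_eq_measureReal_le [IsProbabilityMeasure μ]
    (hc : ContinuousOn lam (Ici 0)) (h0 : ∀ s, 0 ≤ s → 0 ≤ lam s) (hτ : Measurable τ)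
    (hτ0 : ∀ ω, 0 ≤ τ ω)
    (hsurv : ∀ t : ℝ, 0 ≤ t →
      μ {ω | t < τ ω} = ENNReal.ofReal (Real.exp (-∫ s in (0:ℝ)..t, lam s)))
    (ht : 0 ≤ t) :
    ∫ ω, (∫ s in (0:ℝ)..min t (τ ω), lam s) ∂μ = μ.real {ω | τ ω ≤ t} := by
  have hint : ∀ x > 0, IntervalIntegrable lam volume 0 x := fun x hx =>
    (hc.mono Icc_subset_Ici_self).intervalIntegrable_of_Icc hx.le
  have hdensity : IntegrableOn (fun u => lam u * Real.exp (-∫ s in (0:ℝ)..u, lam s)) (Ioo 0 t) :=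
    ((hc.mono Icc_subset_Ici_self).mul (continuousOn_integral_Icc hc ht).neg.rexp).integrableOn_Icc
      |>.mono_set Ioo_subset_Icc_self
  rw [integral_eq_lintegral_of_nonneg_ae
      (ae_of_all _ fun ω => integral_nonneg (le_min ht (hτ0 ω)) fun s hs => h0 s hs.1)
      (measurable_integral_min hc ht hτ0 (measurable_const.min hτ)).aestronglyMeasurable,
    lintegral_integral_min_eq hint h0 hτ hτ0 ht,
    setLIntegral_congr_fun measurableSet_Ioo fun u hu => by
      rw [hsurv u hu.1.le, ← ENNReal.ofReal_mul (Real.exp_pos _).le, mul_comm],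
    ← ofReal_integral_eq_lintegral_ofReal hdensity
      (ae_restrict_of_forall_mem measurableSet_Ioo fun u hu =>
        mul_nonneg (h0 u hu.1.le) (Real.exp_pos _).le),
    ← integral_Ioc_eq_integral_Ioo, ← integral_of_le ht, integral_mul_exp_neg_integral hc ht,
    show {ω | τ ω ≤ t} = {ω | t < τ ω}ᶜ by ext; simp,
    probReal_compl_eq_one_sub (measurableSet_lt measurable_const hτ), measureReal_def, hsurv t ht,
    ENNReal.toReal_ofReal (Real.exp_pos _).le, ENNReal.toReal_ofReal]
  exact sub_nonneg.2 <| Real.exp_le_one_iff.2 <| neg_nonpos.2 <|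
    integral_nonneg ht fun s hs => h0 s hs.1

end RandomTime

section DefaultProcess

variable {Ω : Type*} {τ : Ω → ℝ} {lam : ℝ → ℝ}

noncomputable def compensatedDefault (lam : ℝ → ℝ) (τ : Ω → ℝ) (t : ℝ≥0) (ω : Ω) : ℝ :=
  {ω | τ ω ≤ (t : ℝ)}.indicator 1 ω - ∫ s in (0:ℝ)..min (t : ℝ) (τ ω), lam s

theorem compensatedDefault_eq_of_le {ω : Ω} {s t : ℝ≥0} (hτs : τ ω ≤ s) (hst : s ≤ t) :
    compensatedDefault lam τ s ω = compensatedDefault lam τ t ω := by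
  have hτt : τ ω ≤ t := hτs.trans (NNReal.coe_le_coe.2 hst)
  simp [compensatedDefault, hτs, hτt]

variable [MeasurableSpace Ω]

def defaultFiltration (hτ : Measurable τ) : Filtration ℝ≥0 ‹MeasurableSpace Ω› :=
  filtrationOfSet (s := fun t : ℝ≥0 => {ω | τ ω ≤ t}) fun _ => measurableSet_le hτ measurable_const

theorem natural_eq_defaultFiltration (hτ : Measurable τ) {D : ℝ≥0 → Ω → ℝ}
    (hD : ∀ t ω, D t ω = if τ ω ≤ (t : ℝ) then 1 else 0) (hD_meas : ∀ t, StronglyMeasurable (D t)) :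
    Filtration.natural D hD_meas = defaultFiltration hτ := by
  obtain rfl : D = fun t : ℝ≥0 => {ω | τ ω ≤ (t : ℝ)}.indicator fun _ => 1 := by
    ext t ω
    simp [hD, indicator_apply]
  exact (Filtration.filtrationOfSet_eq_natural _).symm

theorem measurableSet_defaultFiltration (hτ : Measurable τ) {u t : ℝ≥0} (hut : u ≤ t) :
    MeasurableSet[defaultFiltration hτ t] {ω | τ ω ≤ u} :=
  measurableSet_filtrationOfSet _ t hut

theorem measurable_min_defaultFiltration (hτ : Measurable τ) (hτ0 : ∀ ω, 0 ≤ τ ω) (t : ℝ≥0) :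
    Measurable[defaultFiltration hτ t] fun ω => min (t : ℝ) (τ ω) := by
  refine measurable_of_Iic fun x => ?_
  rcases lt_or_ge x 0 with hx0 | hx0
  · convert @MeasurableSet.empty _ (defaultFiltration hτ t)
    exact eq_empty_of_forall_notMem fun ω hω => (hx0.trans_le (le_min t.2 (hτ0 ω))).not_ge hω
  rcases le_or_gt (t : ℝ) x with htx | hxt
  · convert @MeasurableSet.univ _ (defaultFiltration hτ t)
    exact eq_univ_of_forall fun ω => (min_le_left _ (τ ω)).trans htx
  · have hpre : (fun ω => min (t : ℝ) (τ ω)) ⁻¹' Iic x = {ω | τ ω ≤ x.toNNReal} := by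
      ext ω
      simp [Real.coe_toNNReal x hx0, hxt.not_ge]
    rw [hpre]
    exact measurableSet_defaultFiltration hτ (Real.toNNReal_le_iff_le_coe.2 hxt.le)

theorem stronglyAdapted_compensatedDefault (hc : ContinuousOn lam (Ici 0)) (hτ : Measurable τ)
    (hτ0 : ∀ ω, 0 ≤ τ ω) : StronglyAdapted (defaultFiltration hτ) (compensatedDefault lam τ) :=
  fun t => (stronglyMeasurable_one.indicator (measurableSet_defaultFiltration hτ le_rfl)).sub
    (measurable_integral_min hc t.2 hτ0
      (measurable_min_defaultFiltration hτ hτ0 t)).stronglyMeasurable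

variable {μ : Measure Ω}

theorem integrable_compensatedDefault [IsFiniteMeasure μ] (hc : ContinuousOn lam (Ici 0))
    (h0 : ∀ s, 0 ≤ s → 0 ≤ lam s) (hτ : Measurable τ) (hτ0 : ∀ ω, 0 ≤ τ ω) (t : ℝ≥0) :
    Integrable (compensatedDefault lam τ t) μ :=
  ((integrable_const 1).indicator (measurableSet_le hτ measurable_const)).sub
    (integrable_integral_min hc h0 hτ hτ0 t.2)

theorem integral_compensatedDefault [IsProbabilityMeasure μ] (hc : ContinuousOn lam (Ici 0))
    (h0 : ∀ s, 0 ≤ s → 0 ≤ lam s) (hτ : Measurable τ) (hτ0 : ∀ ω, 0 ≤ τ ω)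
    (hsurv : ∀ t : ℝ, 0 ≤ t →
      μ {ω | t < τ ω} = ENNReal.ofReal (Real.exp (-∫ s in (0:ℝ)..t, lam s)))
    (t : ℝ≥0) : ∫ ω, compensatedDefault lam τ t ω ∂μ = 0 := by
  have hdefault : MeasurableSet {ω | τ ω ≤ (t : ℝ)} := measurableSet_le hτ measurable_const
  have hind : Integrable ({ω | τ ω ≤ (t : ℝ)}.indicator (1 : Ω → ℝ)) μ :=
    (integrable_const 1).indicator hdefault
  refine (integral_sub hind (integrable_integral_min hc h0 hτ hτ0 t.2)).trans ?_
  rw [integral_indicator_one hdefault,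
    integral_integral_min_eq_measureReal_le hc h0 hτ hτ0 hsurv t.2]
  exact sub_self _

end DefaultProcess

/-- In a reduced-form credit model, let `lam : [0,∞) → [0,∞)` be a
continuous hazard rate with cumulative hazard `Λ t = ∫_0^t lam s ds`, and let `τ ≥ 0`
have survival function `P(τ > t) = exp(-Λ t)` for `t ≥ 0`. Let `D t = 1_{τ ≤ t}` be
the default indicator process and `(H_t)` its natural filtration. Then the
compensated default process `M t = D t - ∫_0^{min(t,τ)} lam s ds` is a martingale
with respect to `(H_t)`. -/
theorem compensated_default_process_martingale
    {Ω : Type*} [MeasurableSpace Ω] (μ : Measure Ω) [IsProbabilityMeasure μ]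
    (lam : ℝ → ℝ)
    (hlam_cont : ContinuousOn lam (Set.Ici (0:ℝ)))
    (hlam_nonneg : ∀ s : ℝ, 0 ≤ s → 0 ≤ lam s)
    (τ : Ω → ℝ) (hτ_meas : Measurable τ) (hτ_nonneg : ∀ ω, 0 ≤ τ ω)
    (hsurv : ∀ t : ℝ, 0 ≤ t →
      μ {ω | t < τ ω} = ENNReal.ofReal (Real.exp (-∫ s in (0:ℝ)..t, lam s)))
    (D : ℝ≥0 → Ω → ℝ)
    (hD : ∀ (t : ℝ≥0) (ω : Ω), D t ω = if τ ω ≤ (t : ℝ) then 1 else 0)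
    (hD_meas : ∀ t : ℝ≥0, StronglyMeasurable (D t))
    (M : ℝ≥0 → Ω → ℝ)
    (hM : ∀ (t : ℝ≥0) (ω : Ω),
      M t ω = D t ω - ∫ s in (0:ℝ)..(min (t : ℝ) (τ ω)), lam s) :
    Martingale M (Filtration.natural D hD_meas) μ := by
  obtain rfl : M = compensatedDefault lam τ := by
    ext t ω
    simp [hM, hD, compensatedDefault, indicator_apply]
  rw [natural_eq_defaultFiltration hτ_meas hD hD_meas]
  have hmean := integral_compensatedDefault hlam_cont hlam_nonneg hτ_meas hτ_nonneg hsurv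
  refine martingale_filtrationOfSet (s := fun u : ℝ≥0 => {ω | τ ω ≤ u}) _
    (fun u v huv ω (hω : τ ω ≤ u) => hω.trans huv)
    (stronglyAdapted_compensatedDefault hlam_cont hτ_meas hτ_nonneg)
    (integrable_compensatedDefault hlam_cont hlam_nonneg hτ_meas hτ_nonneg)
    (fun s t _ => (hmean s).trans (hmean t).symm)
    fun u s t hus hst => setIntegral_congr_fun (measurableSet_le hτ_meas measurable_const)
      fun ω (hω : τ ω ≤ u) => compensatedDefault_eq_of_le (hω.trans hus) hst
end

section
/- Let λ : [0,∞) → [0,∞) be continuous with cumulative hazard Λ(t) = ∫_0^t λ(s) ds, and let τ be a nonnegative random variable on a probability space (Ω, F, P) with survival function P(τ > t) = exp(−Λ(t)) for all t ≥ 0. Let (H_t) be the natural filtration of the default process D_t = 1_{τ ≤ t}. Then for all 0 ≤ t ≤ u, almost surely E[1_{τ > u} | H_t] = 1_{τ > t} · exp(−(Λ(u) − Λ(t))). -/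
open MeasureTheory Filter Set intervalIntegral
open scoped NNReal

/-!
Before the default, the history `H_t` carries no information beyond the fact that `τ > t`:
every `D j` with `j ≤ t` vanishes on `{τ > t}`, so this event is an atom of `H_t`. On an atom
the conditional expectation of `1_{τ > u}` is the constant `P(τ > u) / P(τ > t)`, which for
the survival function `exp (-Λ)` is `exp (-(Λ u - Λ t))`.
-/

namespace MeasurableSpace

variable {Ω : Type*}

/-- The largest σ-algebra having `S` as an atom. -/
@[reducible]
def ofAtom (S : Set Ω) : MeasurableSpace Ω where
  MeasurableSet' A := S ⊆ A ∨ Disjoint A S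
  measurableSet_empty := Or.inr (empty_disjoint S)
  measurableSet_compl A := by
    rintro (hA | hA)
    · exact Or.inr (disjoint_compl_left.mono_right hA)
    · exact Or.inl (subset_compl_comm.mp hA.subset_compl_right)
  measurableSet_iUnion A hA := by
    by_cases h : ∃ i, S ⊆ A i
    · obtain ⟨i, hi⟩ := h
      exact Or.inl (hi.trans (subset_iUnion A i))
    · exact Or.inr (disjoint_iUnion_left.mpr fun i => (hA i).resolve_left (not_exists.mp h i))

theorem comap_le_ofAtom {β : Type*} [MeasurableSpace β] {f : Ω → β} {S : Set Ω} (c : β)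
    (hf : EqOn f (fun _ => c) S) :
    MeasurableSpace.comap f ‹_› ≤ ofAtom S := by
  rintro _ ⟨B, -, rfl⟩
  by_cases hc : c ∈ B
  · exact Or.inl fun ω hω => by simpa [mem_preimage, hf hω] using hc
  · exact Or.inr (disjoint_right.mpr fun ω hω h => hc (by simpa [mem_preimage, hf hω] using h))

end MeasurableSpace

open MeasurableSpace

theorem condExp_indicator_one_of_subset_atom {Ω : Type*} {m m₀ : MeasurableSpace Ω}
    {μ : Measure Ω} [IsFiniteMeasure μ] (hm : m ≤ m₀) {S U : Set Ω}
    (hS : MeasurableSet[m] S) (hU : MeasurableSet U) (hUS : U ⊆ S) (hatom : m ≤ ofAtom S) :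
    μ[U.indicator 1 | m] =ᵐ[μ] S.indicator fun _ => μ.real U / μ.real S := by
  refine (ae_eq_condExp_of_forall_setIntegral_eq hm ((integrable_const 1).indicator hU)
    (fun A _ _ => ((integrable_const _).indicator (hm S hS)).integrableOn)
    (fun A hA _ => ?_)
    (stronglyMeasurable_const.indicator hS).aestronglyMeasurable).symm
  rw [integral_indicator_const _ (hm S hS), integral_indicator_one hU,
    measureReal_restrict_apply (hm S hS), measureReal_restrict_apply hU, smul_eq_mul]
  rcases hatom A hA with hSA | hAS
  · rw [inter_eq_left.mpr hSA, inter_eq_left.mpr (hUS.trans hSA)]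
    rcases eq_or_ne (μ.real S) 0 with h0 | h0
    · rw [h0, zero_mul, eq_comm]
      exact measureReal_mono_null hUS h0
    · exact mul_div_cancel₀ _ h0
  · rw [hAS.symm.inter_eq, (hAS.symm.mono_left hUS).inter_eq]
    simp

section DefaultTime

variable {Ω : Type*} [MeasurableSpace Ω] {τ : Ω → ℝ} {D : ℝ≥0 → Ω → ℝ}
  {hD_meas : ∀ t : ℝ≥0, StronglyMeasurable (D t)}

theorem measurableSet_natural_survival
    (hD : ∀ (t : ℝ≥0) (ω : Ω), D t ω = if τ ω ≤ (t : ℝ) then 1 else 0) (t : ℝ≥0) :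
    MeasurableSet[Filtration.natural D hD_meas t] {ω | (t : ℝ) < τ ω} := by
  have hpre : {ω | (t : ℝ) < τ ω} = D t ⁻¹' {0} := by
    ext ω
    simp [hD, not_le]
  rw [hpre]
  exact ((Filtration.stronglyAdapted_natural hD_meas t).measurable) (measurableSet_singleton 0)

theorem natural_le_ofAtom_survival
    (hD : ∀ (t : ℝ≥0) (ω : Ω), D t ω = if τ ω ≤ (t : ℝ) then 1 else 0) (t : ℝ≥0) :
    Filtration.natural D hD_meas t ≤ ofAtom {ω | (t : ℝ) < τ ω} :=
  iSup₂_le fun j hj => comap_le_ofAtom 0 fun ω (hω : (t : ℝ) < τ ω) => by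
    have hjt : (j : ℝ) ≤ t := hj
    simp [hD, hjt.trans_lt hω]

theorem condExp_survival_natural (μ : Measure Ω) [IsFiniteMeasure μ] (hτ_meas : Measurable τ)
    (hD : ∀ (t : ℝ≥0) (ω : Ω), D t ω = if τ ω ≤ (t : ℝ) then 1 else 0)
    {t u : ℝ≥0} (htu : t ≤ u) :
    μ[{ω | (u : ℝ) < τ ω}.indicator 1 | Filtration.natural D hD_meas t]
      =ᵐ[μ] {ω | (t : ℝ) < τ ω}.indicator
        fun _ => μ.real {ω | (u : ℝ) < τ ω} / μ.real {ω | (t : ℝ) < τ ω} :=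
  condExp_indicator_one_of_subset_atom ((Filtration.natural D hD_meas).le t)
    (measurableSet_natural_survival hD t) (measurableSet_lt measurable_const hτ_meas)
    (fun _ (hω : (u : ℝ) < _) => (show (t : ℝ) ≤ u from htu).trans_lt hω)
    (natural_le_ofAtom_survival hD t)

end DefaultTime

theorem conditional_survival_probability_general
    {Ω : Type*} [MeasurableSpace Ω] (μ : Measure Ω) [IsProbabilityMeasure μ]
    (lam : ℝ → ℝ)
    (τ : Ω → ℝ) (hτ_meas : Measurable τ)
    (hsurv : ∀ t : ℝ, 0 ≤ t →
      μ {ω | t < τ ω} = ENNReal.ofReal (Real.exp (-∫ s in (0:ℝ)..t, lam s)))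
    (D : ℝ≥0 → Ω → ℝ)
    (hD : ∀ (t : ℝ≥0) (ω : Ω), D t ω = if τ ω ≤ (t : ℝ) then 1 else 0)
    (hD_meas : ∀ t : ℝ≥0, StronglyMeasurable (D t))
    (t u : ℝ≥0) (htu : t ≤ u) :
    μ[(fun ω => if (u : ℝ) < τ ω then (1:ℝ) else 0) | (Filtration.natural D hD_meas) t]
      =ᵐ[μ] fun ω => (if (t : ℝ) < τ ω then (1:ℝ) else 0) *
        Real.exp (-((∫ s in (0:ℝ)..(u:ℝ), lam s) - ∫ s in (0:ℝ)..(t:ℝ), lam s)) := by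
  have hsurv_real (s : ℝ≥0) :
      μ.real {ω | (s : ℝ) < τ ω} = Real.exp (-∫ r in (0:ℝ)..(s:ℝ), lam r) := by
    rw [measureReal_def, hsurv s s.coe_nonneg, ENNReal.toReal_ofReal (Real.exp_pos _).le]
  have hind :
      (fun ω => if (u : ℝ) < τ ω then (1:ℝ) else 0) = {ω | (u : ℝ) < τ ω}.indicator 1 := by
    ext ω
    simp [indicator_apply]
  rw [hind]
  refine (condExp_survival_natural μ hτ_meas hD htu).trans (Eventually.of_forall fun ω => ?_)
  rw [hsurv_real, hsurv_real, ← Real.exp_sub, neg_sub_neg, neg_sub]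
  by_cases h : (t : ℝ) < τ ω <;> simp [h]

/-- With hazard rate `lam`, cumulative hazard `Λ t = ∫_0^t lam s ds`,
default time `τ ≥ 0` with survival function `P(τ > t) = exp(-Λ t)`, and `(H_t)` the
natural filtration of the default process `D t = 1_{τ ≤ t}`, for all `0 ≤ t ≤ u`,
`E[1_{τ > u} | H_t] = 1_{τ > t} · exp(-(Λ u - Λ t))` almost surely. -/
theorem conditional_survival_probability
    {Ω : Type*} [MeasurableSpace Ω] (μ : Measure Ω) [IsProbabilityMeasure μ]
    (lam : ℝ → ℝ)
    (hlam_cont : ContinuousOn lam (Set.Ici (0:ℝ)))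
    (hlam_nonneg : ∀ s : ℝ, 0 ≤ s → 0 ≤ lam s)
    (τ : Ω → ℝ) (hτ_meas : Measurable τ) (hτ_nonneg : ∀ ω, 0 ≤ τ ω)
    (hsurv : ∀ t : ℝ, 0 ≤ t →
      μ {ω | t < τ ω} = ENNReal.ofReal (Real.exp (-∫ s in (0:ℝ)..t, lam s)))
    (D : ℝ≥0 → Ω → ℝ)
    (hD : ∀ (t : ℝ≥0) (ω : Ω), D t ω = if τ ω ≤ (t : ℝ) then 1 else 0)
    (hD_meas : ∀ t : ℝ≥0, StronglyMeasurable (D t))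
    (t u : ℝ≥0) (htu : t ≤ u) :
    μ[(fun ω => if (u : ℝ) < τ ω then (1:ℝ) else 0) | (Filtration.natural D hD_meas) t]
      =ᵐ[μ] fun ω => (if (t : ℝ) < τ ω then (1:ℝ) else 0) *
        Real.exp (-((∫ s in (0:ℝ)..(u:ℝ), lam s) - ∫ s in (0:ℝ)..(t:ℝ), lam s)) :=
  conditional_survival_probability_general μ lam τ hτ_meas hsurv D hD hD_meas t u htu
end
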